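/- Let α₁ ∈ ℝ, α₂ > 0, ε > 0 and 0 < β < 8 + ε. Then the function h₁ : ℝ → ℝ, y ↦ Re(Q(iy)), has precisely 2 positive roots ȳ₀, ȳ₁ with 0 < ȳ₀ < ȳ₁; moreover h₁(y) > 0 for 0 ≤ y < ȳ₀, h₁(ȳ₀) = 0, h₁(y) < 0 for ȳ₀ < y < ȳ₁, h₁(ȳ₁) = 0, and h₁(y) > 0 for y > ȳ₁. -/

import Mathlib

/-!
Dividing `Re Q(iy) = y⁴ - 2c y² + 1 - d y (y² + 1)` by `y²` gives a quadratic in `w = y + 1/y`,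
namely `w² - d w - (2c + 2)`. Its positive root `t` exceeds `2`, which splits the quartic as
`(y² - t y + 1)(y² + (t - d) y + 1)`: the second factor is positive for `y ≥ 0`, and the first
has two positive roots `r₀ < r₁` (with `r₀ r₁ = 1`), giving the sign pattern.
-/

noncomputable def Q (a1 a2 e b : ℝ) (z : ℂ) : ℂ :=
  z ^ 4
    + (4 * z / ((b : ℂ) + (e : ℂ)))
        * (((2 : ℂ) + (e : ℂ)) * (z ^ 2 + 1) + ((a1 : ℂ) - Complex.I * (a2 : ℂ)) * (z ^ 2 - 1))
    + 2 * (((16 : ℂ) - (b : ℂ) + 3 * (e : ℂ)) / ((b : ℂ) + (e : ℂ))) * z ^ 2 + 1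

lemma re_Q_I_mul_ofReal (a1 a2 e b y : ℝ) (hbe : b + e ≠ 0) :
    (Q a1 a2 e b (Complex.I * y)).re
      = y ^ 4 - 2 * ((16 - b + 3 * e) / (b + e)) * y ^ 2 + 1 - 4 * a2 / (b + e) * y * (y ^ 2 + 1) := by
  have hden : (b : ℂ) + e = ((b + e : ℝ) : ℂ) := by push_cast; ring
  have hnum : 16 - (b : ℂ) + 3 * e = ((16 - b + 3 * e : ℝ) : ℂ) := by push_cast; ring
  simp only [Q, hden, hnum, div_eq_mul_inv, ← Complex.ofReal_inv]
  simp only [Complex.mul_re, Complex.mul_im, Complex.add_re, Complex.add_im, pow_succ, pow_zero,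
    Complex.one_re, Complex.one_im, Complex.I_re, Complex.I_im, Complex.ofReal_re,
    Complex.ofReal_im, Complex.sub_re, Complex.sub_im, Complex.re_ofNat, Complex.im_ofNat]
  field_simp
  ring

lemma exists_two_lt_and_mul_sub_eq {c d : ℝ} (hc : -1 < c) (hcd : 1 < c + d) :
    ∃ t : ℝ, 2 < t ∧ d < t ∧ t * (t - d) = 2 * c + 2 := by
  set s := √(d ^ 2 + 8 * c + 8)
  have hs : s ^ 2 = d ^ 2 + 8 * c + 8 := Real.sq_sqrt (by nlinarith)
  have hs0 : 0 ≤ s := Real.sqrt_nonneg _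
  refine ⟨(d + s) / 2, ?_, ?_, by linear_combination hs / 4⟩
  · nlinarith [sq_nonneg (s - (4 - d))]
  · nlinarith [sq_nonneg (s - d)]

lemma reciprocal_quartic_eq_mul {c d t : ℝ} (ht : t * (t - d) = 2 * c + 2) (y : ℝ) :
    y ^ 4 - 2 * c * y ^ 2 + 1 - d * y * (y ^ 2 + 1)
      = (y ^ 2 + (t - d) * y + 1) * (y ^ 2 - t * y + 1) := by
  linear_combination y ^ 2 * ht

lemma exists_roots_sq_sub_mul_add_one {t : ℝ} (ht : 2 < t) :
    ∃ r₀ r₁ : ℝ, 0 < r₀ ∧ r₀ < r₁ ∧ ∀ y, y ^ 2 - t * y + 1 = (y - r₀) * (y - r₁) := by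
  set u := √(t ^ 2 - 4)
  have hu : u ^ 2 = t ^ 2 - 4 := Real.sq_sqrt (by nlinarith)
  have hu0 : 0 < u := Real.sqrt_pos.2 (by nlinarith)
  refine ⟨(t - u) / 2, (t + u) / 2, by nlinarith, by linarith, fun y ↦ ?_⟩
  linear_combination hu / 4

lemma sign_pattern_of_eq_mul {f q : ℝ → ℝ} {r₀ r₁ : ℝ} (h₀ : 0 < r₀) (h₀₁ : r₀ < r₁)
    (hq : ∀ y, 0 ≤ y → 0 < q y) (hf : ∀ y, f y = q y * ((y - r₀) * (y - r₁))) :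
    f r₀ = 0 ∧ f r₁ = 0 ∧
      (∀ y, 0 < y → f y = 0 → y = r₀ ∨ y = r₁) ∧
      (∀ y, 0 ≤ y → y < r₀ → 0 < f y) ∧
      (∀ y, r₀ < y → y < r₁ → f y < 0) ∧
      (∀ y, r₁ < y → 0 < f y) := by
  refine ⟨by simp [hf], by simp [hf], fun y hy hfy ↦ ?_, fun y hy hyr ↦ ?_,
    fun y hy hyr ↦ ?_, fun y hy ↦ ?_⟩
  · rw [hf, mul_eq_zero, mul_eq_zero, sub_eq_zero, sub_eq_zero] at hfy
    exact hfy.resolve_left (hq y hy.le).ne'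
  · rw [hf]
    exact mul_pos (hq y hy) (mul_pos_of_neg_of_neg (by linarith) (by linarith))
  · rw [hf]
    exact mul_neg_of_pos_of_neg (hq y (by linarith)) (mul_neg_of_pos_of_neg (by linarith) (by linarith))
  · rw [hf]
    exact mul_pos (hq y (by linarith)) (mul_pos (by linarith) (by linarith))

/-- For `α₂ > 0`, `ε > 0` and `0 < β < 8 + ε`, the map `h₁ : y ↦ Re(Q(iy))` has
precisely 2 positive roots `ȳ₀ < ȳ₁`, and is positive on `[0, ȳ₀)`, negative on
`(ȳ₀, ȳ₁)` and positive on `(ȳ₁, ∞)`. -/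
theorem stmt_14 (a1 a2 e b : ℝ) (ha2 : 0 < a2) (he : 0 < e)
    (hb₁ : 0 < b) (hb₂ : b < 8 + e) :
    ∃ y₀ y₁ : ℝ, 0 < y₀ ∧ y₀ < y₁ ∧
      (Q a1 a2 e b (Complex.I * (y₀ : ℂ))).re = 0 ∧
      (Q a1 a2 e b (Complex.I * (y₁ : ℂ))).re = 0 ∧
      (∀ y : ℝ, 0 < y → (Q a1 a2 e b (Complex.I * (y : ℂ))).re = 0 → y = y₀ ∨ y = y₁) ∧
      (∀ y : ℝ, 0 ≤ y → y < y₀ → 0 < (Q a1 a2 e b (Complex.I * (y : ℂ))).re) ∧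
      (∀ y : ℝ, y₀ < y → y < y₁ → (Q a1 a2 e b (Complex.I * (y : ℂ))).re < 0) ∧
      (∀ y : ℝ, y₁ < y → 0 < (Q a1 a2 e b (Complex.I * (y : ℂ))).re) := by
  have hbe : 0 < b + e := by linarith
  have hc : 1 < (16 - b + 3 * e) / (b + e) := by rw [lt_div_iff₀ hbe]; linarith
  have hd : 0 < 4 * a2 / (b + e) := by positivity
  obtain ⟨t, ht2, hdt, ht⟩ := exists_two_lt_and_mul_sub_eq (c := (16 - b + 3 * e) / (b + e))
    (d := 4 * a2 / (b + e)) (by linarith) (by linarith)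
  obtain ⟨r₀, r₁, hr₀, hr₀₁, hr⟩ := exists_roots_sq_sub_mul_add_one ht2
  refine ⟨r₀, r₁, hr₀, hr₀₁,
    sign_pattern_of_eq_mul (f := fun y : ℝ ↦ (Q a1 a2 e b (Complex.I * y)).re)
      (q := fun y ↦ y ^ 2 + (t - 4 * a2 / (b + e)) * y + 1) hr₀ hr₀₁
      (fun y hy ↦ by nlinarith) fun y ↦ ?_⟩
  rw [re_Q_I_mul_ofReal a1 a2 e b y hbe.ne', reciprocal_quartic_eq_mul ht, hr]
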